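/- arXiv:2406.09583 — 6 statements merged into one kernel-verified Lean document; each statement's English description precedes it below -/
import Mathlib

section
/- For a matrix A ∈ ℂ^{d×d} and p ∈ (1,∞), the p-ellipticity constant is invariant under replacing p by its Hölder conjugate: Δ_p(A) = Δ_{p'}(A), where p' = p/(p-1). -/
open Matrix

/-- `λ(A)`: the ellipticity constant, minimum over unit vectors `ξ` of `Re(Aξ · conj ξ)`. -/
noncomputable def lamConst {d : ℕ} (A : Matrix (Fin d) (Fin d) ℂ) : ℝ :=
  sInf { r : ℝ | ∃ ξ : Fin d → ℂ, (∑ i, Complex.normSq (ξ i)) = 1 ∧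
    r = (A.mulVec ξ ⬝ᵥ star ξ).re }

/-- `Δ_p(A)`: the `p`-ellipticity constant. -/
noncomputable def DeltaConst {d : ℕ} (p : ℝ) (A : Matrix (Fin d) (Fin d) ℂ) : ℝ :=
  sInf { r : ℝ | ∃ ξ : Fin d → ℂ, (∑ i, Complex.normSq (ξ i)) = 1 ∧
    r = (A.mulVec ξ ⬝ᵥ star (ξ + ((1 - 2/p : ℝ) : ℂ) • star ξ)).re }

lemma aux_rot {d : ℕ} (A : Matrix (Fin d) (Fin d) ℂ) (c : ℂ) (ξ : Fin d → ℂ) :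
    A.mulVec (Complex.I • ξ) ⬝ᵥ star (Complex.I • ξ + (-c) • star (Complex.I • ξ))
      = A.mulVec ξ ⬝ᵥ star (ξ + c • star ξ) := by
  have h1 : (Complex.I • ξ + (-c) • star (Complex.I • ξ))
      = Complex.I • (ξ + c • star ξ) := by
    funext i
    simp only [Pi.smul_apply, Pi.add_apply, Pi.star_apply, smul_eq_mul,
      Complex.star_def, _root_.map_mul, Complex.conj_I]
    ring
  rw [h1]
  rw [Matrix.mulVec_smul]
  simp only [dotProduct, Pi.smul_apply, Pi.star_apply, smul_eq_mul, star_mul']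
  have : ∀ i, Complex.I * A.mulVec ξ i * (star Complex.I * star ((ξ + c • star ξ) i))
      = A.mulVec ξ i * star ((ξ + c • star ξ) i) := by
    intro i
    simp only [Complex.star_def, Complex.conj_I]
    ring_nf
    rw [Complex.I_sq]
    ring
  simp only [this]

lemma norm_rot {d : ℕ} (ξ : Fin d → ℂ) :
    (∑ i, Complex.normSq ((Complex.I • ξ) i)) = ∑ i, Complex.normSq (ξ i) := by
  simp [Complex.normSq_mul]

theorem Delta_conjExponent_invariant {d : ℕ} (p : ℝ) (hp : 1 < p)
    (A : Matrix (Fin d) (Fin d) ℂ) :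
    DeltaConst p A = DeltaConst (p / (p - 1)) A := by
  have hp0 : p ≠ 0 := by linarith
  have hp1 : p - 1 ≠ 0 := by intro h; linarith [sub_eq_zero.mp h]
  have hc : ((1 - 2/(p/(p-1)) : ℝ) : ℂ) = -((1 - 2/p : ℝ) : ℂ) := by
    have hr : (1 - 2/(p/(p-1)) : ℝ) = -(1 - 2/p) := by field_simp; ring
    rw [hr]; push_cast; ring
  unfold DeltaConst
  congr 1
  ext r
  constructor
  · rintro ⟨ξ, hξ, rfl⟩
    refine ⟨Complex.I • ξ, by rw [norm_rot]; exact hξ, ?_⟩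
    rw [hc, aux_rot]
  · rintro ⟨ξ, hξ, rfl⟩
    refine ⟨Complex.I • ξ, by rw [norm_rot]; exact hξ, ?_⟩
    have := aux_rot A (((1 - 2/(p/(p-1)) : ℝ) : ℂ)) ξ
    rw [hc] at this ⊢
    rw [neg_neg] at this
    rw [this]
end

section
/- A matrix A ∈ ℂ^{d×d} with λ(A) > 0 has real entries if and only if Δ_p(A) > 0 for all p ∈ (1,∞). -/
/-!
Write `c = 1 - 2/p ∈ (-1, 1)`, so that `Δ_p(A)` is the infimum over the unit sphere of
`Re(Aξ · ξ̄) + c Re(Aξ · ξ)`. If `A` is real, substituting `ξ ± ξ̄` turns this expression into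
`(1 + c)/4` and `(1 - c)/4` times the ordinary form `Re(Aζ · ζ̄)` at `ζ = ξ + ξ̄` and `ζ = ξ - ξ̄`,
whose squared norms add up to `4|ξ|²`; hence `Δ_p(A) ≥ λ(A) min(1 + c, 1 - c) > 0`.
Conversely, if `Δ_p(A) > 0` for all `p` then `Re(Aζ · ζ̄) + c Re(Aζ · ζ) ≥ 0` for all
`c ∈ (-1, 1)`, so letting `c → -1` gives `Re(Aζ · ζ) ≤ Re(Aζ · ζ̄)`. For `ζ = t eⱼ + i eᵢ` the
difference of the two sides is `2 (t Im Aᵢⱼ + Re Aᵢᵢ)`, which is nonnegative for every real `t`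
only if `Im Aᵢⱼ = 0`.
-/

open Matrix

open Complex

section

variable {d : ℕ}

lemma le_of_forall_nonneg_add_mul {a b : ℝ} (h : ∀ c, -1 < c → c < 1 → 0 ≤ a + c * b) :
    b ≤ a := by
  by_contra! hab
  have ha : 0 ≤ a := by simpa using h 0 (by norm_num) (by norm_num)
  have hb : 0 < b := ha.trans_lt hab
  -- at `c = -(a + b) / (2b) ∈ (-1, 0)` the value is `(a - b) / 2 < 0`
  have key := h (-(a + b) / (2 * b)) (by rw [lt_div_iff₀ (by positivity)]; linarith)
    (by rw [div_lt_one (by positivity)]; linarith)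
  rw [div_mul_eq_mul_div, mul_comm 2 b, ← div_div, mul_div_cancel_right₀ _ hb.ne'] at key
  linarith

lemma eq_zero_of_forall_nonneg_mul_add {a b : ℝ} (h : ∀ t, 0 ≤ a * t + b) : a = 0 := by
  by_contra ha
  have := h (-(b + 1) / a)
  rw [mul_div_cancel₀ _ ha] at this
  linarith

noncomputable def normSqSum (ξ : Fin d → ℂ) : ℝ := ∑ i, normSq (ξ i)

lemma normSqSum_nonneg (ξ : Fin d → ℂ) : 0 ≤ normSqSum ξ :=
  Finset.sum_nonneg fun i _ => normSq_nonneg (ξ i)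

lemma normSqSum_eq_zero_iff {ξ : Fin d → ℂ} : normSqSum ξ = 0 ↔ ξ = 0 := by
  simp [normSqSum, Finset.sum_eq_zero_iff_of_nonneg fun i _ => normSq_nonneg (ξ i), funext_iff]

lemma normSqSum_smul (r : ℝ) (ξ : Fin d → ℂ) :
    normSqSum ((r : ℂ) • ξ) = r ^ 2 * normSqSum ξ := by
  simp [normSqSum, normSq_mul, normSq_ofReal, Finset.mul_sum, sq]

lemma normSqSum_add_star_add_normSqSum_sub_star (ξ : Fin d → ℂ) :
    normSqSum (ξ + star ξ) + normSqSum (ξ - star ξ) = 4 * normSqSum ξ := by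
  simp only [normSqSum, ← Finset.sum_add_distrib, Finset.mul_sum]
  refine Finset.sum_congr rfl fun i _ => ?_
  simp only [Pi.add_apply, Pi.sub_apply, Pi.star_apply, normSq_apply, add_re, add_im, sub_re,
    sub_im, star_def, conj_re, conj_im]
  ring

noncomputable def unitInf (f : (Fin d → ℂ) → ℝ) : ℝ :=
  sInf {r | ∃ ξ, normSqSum ξ = 1 ∧ r = f ξ}

section unitInf

variable {f : (Fin d → ℂ) → ℝ}

lemma exists_normSqSum_eq_one_of_unitInf_pos (h : 0 < unitInf f) :
    ∃ ξ : Fin d → ℂ, normSqSum ξ = 1 := by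
  by_contra hne
  have : {r | ∃ ξ, normSqSum ξ = 1 ∧ r = f ξ} = ∅ :=
    Set.eq_empty_of_forall_notMem fun r ⟨ξ, hξ, _⟩ => hne ⟨ξ, hξ⟩
  simp [unitInf, this] at h

lemma le_unitInf {m : ℝ} (hne : ∃ ξ : Fin d → ℂ, normSqSum ξ = 1)
    (h : ∀ ξ, normSqSum ξ = 1 → m ≤ f ξ) : m ≤ unitInf f := by
  obtain ⟨ξ, hξ⟩ := hne
  exact le_csInf ⟨f ξ, ξ, hξ, rfl⟩ fun r ⟨η, hη, hr⟩ => hr ▸ h η hη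

lemma unitInf_le (h : 0 < unitInf f) {ξ : Fin d → ℂ} (hξ : normSqSum ξ = 1) :
    unitInf f ≤ f ξ := by
  refine csInf_le ?_ ⟨ξ, hξ, rfl⟩
  by_contra hb
  simp [unitInf, Real.sInf_of_not_bddBelow hb] at h

lemma unitInf_mul_normSqSum_le (hf : ∀ (r : ℝ) ξ, f ((r : ℂ) • ξ) = r ^ 2 * f ξ)
    (h : 0 < unitInf f) (ξ : Fin d → ℂ) : unitInf f * normSqSum ξ ≤ f ξ := by
  rcases (normSqSum_nonneg ξ).eq_or_lt with hN | hN
  · obtain rfl := normSqSum_eq_zero_iff.mp hN.symm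
    have hf0 : f 0 = 0 := by simpa using hf 0 0
    simp [← hN, hf0]
  · set r := (√(normSqSum ξ))⁻¹
    have hr : r ^ 2 * normSqSum ξ = 1 := by
      rw [inv_pow, Real.sq_sqrt hN.le, inv_mul_cancel₀ hN.ne']
    have := unitInf_le h (ξ := (r : ℂ) • ξ) (by rw [normSqSum_smul, hr])
    rw [hf] at this
    calc unitInf f * normSqSum ξ ≤ r ^ 2 * f ξ * normSqSum ξ := by gcongr
      _ = f ξ := by rw [mul_right_comm, hr, one_mul]

end unitInf

noncomputable def reForm (A : Matrix (Fin d) (Fin d) ℂ) (ξ η : Fin d → ℂ) : ℝ :=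
  (A *ᵥ ξ ⬝ᵥ star η).re

noncomputable def pForm (A : Matrix (Fin d) (Fin d) ℂ) (c : ℝ) (ξ : Fin d → ℂ) : ℝ :=
  reForm A ξ ξ + c * reForm A ξ (star ξ)

section forms

variable (A : Matrix (Fin d) (Fin d) ℂ)

lemma reForm_smul (r : ℝ) (ξ η : Fin d → ℂ) :
    reForm A ((r : ℂ) • ξ) ((r : ℂ) • η) = r ^ 2 * reForm A ξ η := by
  simp only [reForm, mulVec_smul, smul_dotProduct, star_smul, dotProduct_smul, star_def,
    conj_ofReal, smul_eq_mul, ← mul_assoc, ← ofReal_mul, re_ofReal_mul, sq]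

lemma pForm_smul (c r : ℝ) (ξ : Fin d → ℂ) :
    pForm A c ((r : ℂ) • ξ) = r ^ 2 * pForm A c ξ := by
  have : star ((r : ℂ) • ξ) = (r : ℂ) • star ξ := by rw [star_smul, star_def, conj_ofReal]
  rw [pForm, pForm, this, reForm_smul, reForm_smul]
  ring

lemma lamConst_eq_unitInf : lamConst A = unitInf fun ξ => reForm A ξ ξ := rfl

lemma deltaConst_eq_unitInf (p : ℝ) : DeltaConst p A = unitInf (pForm A (1 - 2 / p)) := by
  have hstar (ξ : Fin d → ℂ) :
      star (((1 - 2 / p : ℝ) : ℂ) • star ξ) = ((1 - 2 / p : ℝ) : ℂ) • ξ := by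
    rw [star_smul, star_star, star_def, conj_ofReal]
  simp only [DeltaConst, unitInf, normSqSum, pForm, reForm, star_add, hstar, dotProduct_add,
    dotProduct_smul, smul_eq_mul, add_re, re_ofReal_mul, star_star]

lemma pForm_eq_of_im_eq_zero (hre : ∀ i j, (A i j).im = 0) (c : ℝ) (ξ : Fin d → ℂ) :
    pForm A c ξ = (1 + c) / 4 * reForm A (ξ + star ξ) (ξ + star ξ)
      + (1 - c) / 4 * reForm A (ξ - star ξ) (ξ - star ξ) := by
  simp only [pForm, reForm, dotProduct, mulVec, re_sum, Finset.mul_sum, Finset.sum_mul,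
    ← Finset.sum_add_distrib]
  refine Finset.sum_congr rfl fun i _ => Finset.sum_congr rfl fun k _ => ?_
  simp only [Pi.add_apply, Pi.sub_apply, Pi.star_apply, star_def, map_add, map_sub, conj_conj,
    mul_re, mul_im, add_re, add_im, sub_re, sub_im, conj_re, conj_im, hre]
  ring

lemma reForm_sub_reForm_star_single (i j : Fin d) (t : ℝ) :
    reForm A ((t : ℂ) • Pi.single j 1 + I • Pi.single i 1)
        ((t : ℂ) • Pi.single j 1 + I • Pi.single i 1)
      - reForm A ((t : ℂ) • Pi.single j 1 + I • Pi.single i 1)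
        (star ((t : ℂ) • Pi.single j 1 + I • Pi.single i 1))
      = 2 * ((A i j).im * t + (A i i).re) := by
  set ζ : Fin d → ℂ := (t : ℂ) • Pi.single j 1 + I • Pi.single i 1
  have hstar : star ζ - ζ = (-2 * I) • Pi.single i 1 := by
    simp only [ζ, star_add, star_smul, ← Pi.single_star, star_one, star_def, conj_ofReal, conj_I]
    module
  have hAζ : (A *ᵥ ζ) i = t * A i j + I * A i i := by
    simp [ζ, mulVec_add, mulVec_smul, mul_comm]
  rw [reForm, reForm, star_star, ← sub_re, ← dotProduct_sub, hstar, dotProduct_smul,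
    dotProduct_single, mul_one, hAζ, smul_eq_mul]
  simp only [mul_re, mul_im, add_re, add_im, neg_re, neg_im, ofReal_re, ofReal_im, I_re, I_im,
    re_ofNat, im_ofNat]
  ring

end forms

section ellipticity

variable {A : Matrix (Fin d) (Fin d) ℂ}

lemma lamConst_mul_normSqSum_le (hA : 0 < lamConst A) (ξ : Fin d → ℂ) :
    lamConst A * normSqSum ξ ≤ reForm A ξ ξ := by
  rw [lamConst_eq_unitInf] at hA ⊢
  exact unitInf_mul_normSqSum_le (fun r ξ => reForm_smul A r ξ ξ) hA ξ

lemma lamConst_mul_min_mul_normSqSum_le_pForm (hre : ∀ i j, (A i j).im = 0)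
    (hA : 0 < lamConst A) {c : ℝ} (hc₁ : -1 ≤ c) (hc₂ : c ≤ 1) (ξ : Fin d → ℂ) :
    lamConst A * min (1 + c) (1 - c) * normSqSum ξ ≤ pForm A c ξ := by
  have hplus := lamConst_mul_normSqSum_le hA (ξ + star ξ)
  have hminus := lamConst_mul_normSqSum_le hA (ξ - star ξ)
  have hplus₀ := mul_nonneg hA.le (normSqSum_nonneg (ξ + star ξ))
  have hminus₀ := mul_nonneg hA.le (normSqSum_nonneg (ξ - star ξ))
  rw [pForm_eq_of_im_eq_zero A hre, ← mul_div_cancel_left₀ (normSqSum ξ) four_ne_zero,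
    ← normSqSum_add_star_add_normSqSum_sub_star]
  calc lamConst A * min (1 + c) (1 - c) * ((normSqSum (ξ + star ξ) + normSqSum (ξ - star ξ)) / 4)
      = (min (1 + c) (1 - c) * (lamConst A * normSqSum (ξ + star ξ))
          + min (1 + c) (1 - c) * (lamConst A * normSqSum (ξ - star ξ))) / 4 := by ring
    _ ≤ ((1 + c) * reForm A (ξ + star ξ) (ξ + star ξ)
          + (1 - c) * reForm A (ξ - star ξ) (ξ - star ξ)) / 4 := by
      refine div_le_div_of_nonneg_right (add_le_add ?_ ?_) zero_le_four
      · exact mul_le_mul (min_le_left _ _) hplus hplus₀ (by linarith)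
      · exact mul_le_mul (min_le_right _ _) hminus hminus₀ (by linarith)
    _ = _ := by ring

lemma deltaConst_pos_of_im_eq_zero (hre : ∀ i j, (A i j).im = 0) (hA : 0 < lamConst A)
    {p : ℝ} (hp : 1 < p) : 0 < DeltaConst p A := by
  have h2p : 0 < 2 / p := by positivity
  have h2p' : 2 / p < 2 := (div_lt_iff₀ (by linarith)).mpr (by linarith)
  rw [deltaConst_eq_unitInf]
  refine lt_of_lt_of_le (by positivity : 0 < lamConst A * min (2 - 2 / p) (2 / p)) ?_
  refine le_unitInf (exists_normSqSum_eq_one_of_unitInf_pos (lamConst_eq_unitInf A ▸ hA))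
    fun ξ hξ => ?_
  have := lamConst_mul_min_mul_normSqSum_le_pForm hre hA (c := 1 - 2 / p) (by linarith)
    (by linarith) ξ
  rwa [hξ, mul_one, show 1 + (1 - 2 / p) = 2 - 2 / p by ring, sub_sub_cancel] at this

lemma reForm_star_le_of_deltaConst_pos (h : ∀ p : ℝ, 1 < p → 0 < DeltaConst p A)
    (ζ : Fin d → ℂ) : reForm A ζ (star ζ) ≤ reForm A ζ ζ := by
  refine le_of_forall_nonneg_add_mul fun c hc₁ hc₂ => ?_
  have hp : 1 < 2 / (1 - c) := by rw [lt_div_iff₀ (by linarith)]; linarith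
  have hc : 1 - 2 / (2 / (1 - c)) = c := by rw [div_div_cancel₀ two_ne_zero]; ring
  have hΔ := h _ hp
  rw [deltaConst_eq_unitInf, hc] at hΔ
  exact (mul_nonneg hΔ.le (normSqSum_nonneg ζ)).trans
    (unitInf_mul_normSqSum_le (pForm_smul A c) hΔ ζ)

end ellipticity

end

theorem real_entries_iff_pElliptic_forall {d : ℕ} (A : Matrix (Fin d) (Fin d) ℂ)
    (hA : 0 < lamConst A) :
    (∀ i j, (A i j).im = 0) ↔ ∀ p : ℝ, 1 < p → 0 < DeltaConst p A := by
  refine ⟨fun hre p hp => deltaConst_pos_of_im_eq_zero hre hA hp, fun h i j => ?_⟩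
  refine eq_zero_of_forall_nonneg_mul_add (b := (A i i).re) fun t => ?_
  have := reForm_star_le_of_deltaConst_pos h ((t : ℂ) • Pi.single j 1 + I • Pi.single i 1)
  rw [← sub_nonneg, reForm_sub_reForm_star_single] at this
  linarith
end

section
/- For a fixed matrix A ∈ ℂ^{d×d}, the map p ↦ Δ_p(A) is non-increasing and Lipschitz continuous on [2,∞). -/
open Matrix

/-!
Put `t = 1 - 2/p`, which runs through `[0, 1)` and is Lipschitz in `p ≥ 2`. Then `Δ_p(A)` is the
infimum over unit `ξ` of `Re(Aξ·ξ̄) + t Re(Aξ·ξ)`, a family of affine functions of `t` whose slopes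
are bounded by `∑ |Aᵢⱼ|`, so the infimum is Lipschitz in `t`. Replacing `ξ` by `iξ` keeps
`Re(Aξ·ξ̄)` and flips the sign of `Re(Aξ·ξ)`, so the infimum is also that of
`Re(Aξ·ξ̄) - t |Re(Aξ·ξ)|`, which is non-increasing in `t ≥ 0`.
-/

theorem LipschitzWith.ciInf {ι : Type*} {F : ι → ℝ → ℝ} {K : NNReal}
    (hF : ∀ i, LipschitzWith K (F i)) (hbdd : ∀ x, BddBelow (Set.range fun i => F i x)) :
    LipschitzWith K fun x => ⨅ i, F i x := by
  cases isEmpty_or_nonempty ι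
  · simpa only [Real.iInf_of_isEmpty] using (LipschitzWith.const (0 : ℝ)).weaken zero_le
  refine LipschitzWith.of_le_add_mul K fun x y => ?_
  rw [← sub_le_iff_le_add]
  refine le_ciInf fun i => sub_le_iff_le_add.mpr ?_
  exact (ciInf_le (hbdd x) i).trans ((hF i).le_add_mul x y)

section TwistedForm

variable {d : ℕ} (A : Matrix (Fin d) (Fin d) ℂ)

def unitVectors (d : ℕ) : Set (Fin d → ℂ) := {ξ | ∑ i, Complex.normSq (ξ i) = 1}

noncomputable def twistedForm (t : ℝ) (ξ : Fin d → ℂ) : ℝ :=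
  (A *ᵥ ξ ⬝ᵥ star ξ).re + t * (A *ᵥ ξ ⬝ᵥ ξ).re

theorem DeltaConst_eq_iInf (p : ℝ) :
    DeltaConst p A = ⨅ ξ : unitVectors d, twistedForm A (1 - 2 / p) ξ := by
  have hform (ξ : Fin d → ℂ) : (A *ᵥ ξ ⬝ᵥ star (ξ + ((1 - 2 / p : ℝ) : ℂ) • star ξ)).re =
      twistedForm A (1 - 2 / p) ξ := by
    simp [twistedForm, dotProduct_add, dotProduct_smul]
  refine congrArg sInf (Set.ext fun r => ?_)
  simp only [Set.mem_ofPred_eq, Set.mem_range, Subtype.exists, exists_prop, unitVectors, hform,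
    eq_comm]

theorem twistedForm_I_smul (t : ℝ) (ξ : Fin d → ℂ) :
    twistedForm A t (Complex.I • ξ) = twistedForm A (-t) ξ := by
  simp [twistedForm, mulVec_smul, Complex.mul_re]

theorem I_smul_mem_unitVectors {ξ : Fin d → ℂ} (hξ : ξ ∈ unitVectors d) :
    Complex.I • ξ ∈ unitVectors d := by
  simpa [unitVectors, Complex.normSq_mul] using hξ

theorem norm_le_one_of_mem_unitVectors {ξ : Fin d → ℂ} (hξ : ξ ∈ unitVectors d) (i : Fin d) :
    ‖ξ i‖ ≤ 1 := by
  have : ‖ξ i‖ ^ 2 ≤ 1 := by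
    rw [Complex.sq_norm, ← hξ]
    exact Finset.single_le_sum (fun j _ => Complex.normSq_nonneg (ξ j)) (Finset.mem_univ i)
  nlinarith [norm_nonneg (ξ i)]

theorem norm_mulVec_dotProduct_le {ξ η : Fin d → ℂ} (hξ : ∀ j, ‖ξ j‖ ≤ 1) (hη : ∀ i, ‖η i‖ ≤ 1) :
    ‖A *ᵥ ξ ⬝ᵥ η‖ ≤ ∑ i, ∑ j, ‖A i j‖ := by
  simp only [dotProduct, mulVec, Finset.sum_mul]
  refine (norm_sum_le _ _).trans (Finset.sum_le_sum fun i _ => ?_)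
  refine (norm_sum_le _ _).trans (Finset.sum_le_sum fun j _ => ?_)
  rw [norm_mul, norm_mul]
  calc ‖A i j‖ * ‖ξ j‖ * ‖η i‖ ≤ ‖A i j‖ * 1 * 1 := by gcongr <;> simp_all
    _ = ‖A i j‖ := by ring

theorem abs_re_mulVec_dotProduct_le {ξ : Fin d → ℂ} (hξ : ξ ∈ unitVectors d) :
    |(A *ᵥ ξ ⬝ᵥ ξ).re| ≤ ∑ i, ∑ j, ‖A i j‖ :=
  (Complex.abs_re_le_norm _).trans <| norm_mulVec_dotProduct_le A
    (norm_le_one_of_mem_unitVectors hξ) (norm_le_one_of_mem_unitVectors hξ)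

theorem abs_re_mulVec_dotProduct_star_le {ξ : Fin d → ℂ} (hξ : ξ ∈ unitVectors d) :
    |(A *ᵥ ξ ⬝ᵥ star ξ).re| ≤ ∑ i, ∑ j, ‖A i j‖ :=
  (Complex.abs_re_le_norm _).trans <| norm_mulVec_dotProduct_le A
    (norm_le_one_of_mem_unitVectors hξ) (by simpa using norm_le_one_of_mem_unitVectors hξ)

theorem lipschitzWith_twistedForm {ξ : Fin d → ℂ} (hξ : ξ ∈ unitVectors d) :
    LipschitzWith (∑ i, ∑ j, ‖A i j‖₊) fun t => twistedForm A t ξ := by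
  refine LipschitzWith.of_dist_le_mul fun s t => ?_
  have hC := abs_re_mulVec_dotProduct_le A hξ
  push_cast
  simp only [twistedForm, Real.dist_eq, add_sub_add_left_eq_sub, ← sub_mul, abs_mul]
  nlinarith [abs_nonneg (s - t)]

theorem bddBelow_range_twistedForm (t : ℝ) :
    BddBelow (Set.range fun ξ : unitVectors d => twistedForm A t ξ) := by
  refine ⟨-(1 + |t|) * ∑ i, ∑ j, ‖A i j‖, Set.forall_mem_range.2 fun ⟨ξ, hξ⟩ => ?_⟩
  have hf := neg_le_of_abs_le (abs_re_mulVec_dotProduct_star_le A hξ)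
  have htg : |t * (A *ᵥ ξ ⬝ᵥ ξ).re| ≤ |t| * ∑ i, ∑ j, ‖A i j‖ := by
    rw [abs_mul]; exact mul_le_mul_of_nonneg_left (abs_re_mulVec_dotProduct_le A hξ) (abs_nonneg t)
  simp only [twistedForm]
  linarith [neg_abs_le (t * (A *ᵥ ξ ⬝ᵥ ξ).re)]

theorem antitoneOn_iInf_twistedForm :
    AntitoneOn (fun t => ⨅ ξ : unitVectors d, twistedForm A t ξ) (Set.Ici 0) := by
  intro s hs t _ hst
  cases isEmpty_or_nonempty (unitVectors d)
  · simp only [Real.iInf_of_isEmpty, le_refl]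
  refine ciInf_mono_of_forall_exists (bddBelow_range_twistedForm A t) fun ⟨ξ, hξ⟩ => ?_
  have hs : (0 : ℝ) ≤ s := hs
  rcases le_total 0 (A *ᵥ ξ ⬝ᵥ ξ).re with hg | hg
  · refine ⟨⟨Complex.I • ξ, I_smul_mem_unitVectors hξ⟩, ?_⟩
    show twistedForm A t (Complex.I • ξ) ≤ twistedForm A s ξ
    rw [twistedForm_I_smul]
    simp only [twistedForm]
    nlinarith
  · refine ⟨⟨ξ, hξ⟩, ?_⟩
    simp only [twistedForm]
    nlinarith

end TwistedForm

theorem monotoneOn_one_sub_two_div : MonotoneOn (fun p : ℝ => 1 - 2 / p) (Set.Ici 2) :=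
  fun p (hp : 2 ≤ p) _ _ hpq => sub_le_sub_left (div_le_div_of_nonneg_left zero_le_two
    (by linarith) hpq) 1

theorem mapsTo_one_sub_two_div : Set.MapsTo (fun p : ℝ => 1 - 2 / p) (Set.Ici 2) (Set.Ici 0) :=
  fun p (hp : 2 ≤ p) => sub_nonneg.2 ((div_le_one (by linarith)).2 hp)

theorem lipschitzOnWith_one_sub_two_div :
    LipschitzOnWith 2⁻¹ (fun p : ℝ => 1 - 2 / p) (Set.Ici 2) := by
  refine LipschitzOnWith.of_dist_le_mul fun p (hp : 2 ≤ p) q (hq : 2 ≤ q) => ?_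
  have hpq : 4 ≤ p * q := by nlinarith
  have hdiff : 1 - 2 / p - (1 - 2 / q) = 2 * (p - q) / (p * q) := by
    field_simp
    ring
  rw [Real.dist_eq, Real.dist_eq, hdiff, abs_div, abs_mul, abs_of_pos (by positivity : 0 < p * q),
    div_le_iff₀ (by positivity)]
  push_cast
  nlinarith [abs_nonneg (p - q)]

theorem Delta_antitone_lipschitz {d : ℕ} (A : Matrix (Fin d) (Fin d) ℂ) :
    AntitoneOn (fun p : ℝ => DeltaConst p A) (Set.Ici (2 : ℝ)) ∧
    ∃ K : NNReal, LipschitzOnWith K (fun p : ℝ => DeltaConst p A) (Set.Ici (2 : ℝ)) := by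
  have hΔ : (fun p : ℝ => DeltaConst p A) =
      (fun t => ⨅ ξ : unitVectors d, twistedForm A t ξ) ∘ fun p => 1 - 2 / p :=
    funext (DeltaConst_eq_iInf A)
  have hInf := LipschitzWith.ciInf (fun ξ : unitVectors d => lipschitzWith_twistedForm A ξ.2)
    (bddBelow_range_twistedForm A)
  rw [hΔ]
  exact ⟨fun p hp q hq hpq => antitoneOn_iInf_twistedForm A (mapsTo_one_sub_two_div hp)
      (mapsTo_one_sub_two_div hq) (monotoneOn_one_sub_two_div hp hq hpq),
    _, hInf.comp_lipschitzOnWith lipschitzOnWith_one_sub_two_div⟩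
end

section
/- Let p ∈ (2,∞), and A ∈ ℂ^{d×d} satisfy σ_p · ‖Im(A)‖ < λ(A), where σ_p = (p−2)/(2√(p−1)), ‖Im(A)‖ is the operator norm of the imaginary part of A, and λ(A) := min_{|ξ|=1} Re(Aξ·conj ξ) > 0. If θ ∈ (0, π/2 − ω(A)) satisfies tan(θ) < (λ(A) − σ_p‖Im(A)‖)/(λ(A)·tan(ω(A)) + σ_p‖Re(A)‖), then σ_p · ‖Im(e^{iθ}A)‖ < λ(e^{iθ}A). -/
open Matrix

noncomputable def euclNorm {d : ℕ} (v : Fin d → ℂ) : ℝ :=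
  Real.sqrt (∑ i, Complex.normSq (v i))

/-- `Λ(A)`: the operator norm of `A` on the Euclidean space `ℂ^d`. -/
noncomputable def opNorm {d : ℕ} (A : Matrix (Fin d) (Fin d) ℂ) : ℝ :=
  sSup { r : ℝ | ∃ ξ : Fin d → ℂ, (∑ i, Complex.normSq (ξ i)) = 1 ∧
    r = euclNorm (A.mulVec ξ) }

/-- `ω(A)`: the numerical range angle of `A`. -/
noncomputable def omegaConst {d : ℕ} (A : Matrix (Fin d) (Fin d) ℂ) : ℝ :=
  sSup { r : ℝ | ∃ ξ : Fin d → ℂ, (∑ i, Complex.normSq (ξ i)) = 1 ∧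
    r = |Complex.arg (A.mulVec ξ ⬝ᵥ star ξ)| }

/-- Entrywise real part of a complex matrix, as a complex matrix. -/
noncomputable def reMat {d : ℕ} (A : Matrix (Fin d) (Fin d) ℂ) : Matrix (Fin d) (Fin d) ℂ :=
  fun i j => ((A i j).re : ℂ)

/-- Entrywise imaginary part of a complex matrix, as a complex matrix. -/
noncomputable def imMat {d : ℕ} (A : Matrix (Fin d) (Fin d) ℂ) : Matrix (Fin d) (Fin d) ℂ :=
  fun i j => ((A i j).im : ℂ)

noncomputable def sigma_p (p : ℝ) : ℝ := (p - 2) / (2 * Real.sqrt (p - 1))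

/-!
Rotating by `e^{iθ}` mixes the real and imaginary parts, `Im(e^{iθ}A) = sin θ Re A + cos θ Im A`,
so `‖Im(e^{iθ}A)‖ ≤ sin θ ‖Re A‖ + cos θ ‖Im A‖`. Every value `Aξ · conj ξ` on the unit sphere lies
in the sector `|arg| ≤ ω(A)`, hence `|Im(Aξ · conj ξ)| ≤ tan ω(A) Re(Aξ · conj ξ)`, which gives
`λ(e^{iθ}A) ≥ λ(A) (cos θ - sin θ tan ω(A))`. Multiplied through by `cos θ`, the bound on `tan θ`
says exactly that `σ_p` times the first estimate lies below the second.
-/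

lemma Complex.abs_im_le_re_mul_tan {z : ℂ} {ω : ℝ} (hz : |z.arg| ≤ ω) (hω : ω < Real.pi / 2) :
    |z.im| ≤ z.re * Real.tan ω := by
  set a := z.arg
  have hcos : 0 < Real.cos ω := Real.cos_pos_of_mem_Ioo ⟨by linarith [abs_nonneg a], hω⟩
  obtain ⟨ha₁, ha₂⟩ := abs_le.1 hz
  have hsub : Real.sin a * Real.cos ω - Real.cos a * Real.sin ω ≤ 0 := by
    rw [← Real.sin_sub]
    exact Real.sin_nonpos_of_nonpos_of_neg_pi_le (by linarith) (by linarith)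
  have hadd : 0 ≤ Real.sin a * Real.cos ω + Real.cos a * Real.sin ω := by
    rw [← Real.sin_add]
    exact Real.sin_nonneg_of_nonneg_of_le_pi (by linarith) (by linarith)
  have key : |Real.sin a| ≤ Real.cos a * Real.sin ω / Real.cos ω := by
    rw [le_div_iff₀ hcos, ← abs_of_pos hcos, ← abs_mul]
    exact abs_le.2 ⟨by linarith, by linarith⟩
  rw [← Complex.norm_mul_sin_arg, ← Complex.norm_mul_cos_arg, abs_mul, abs_norm, mul_assoc,
    Real.tan_eq_sin_div_cos, mul_div_assoc']
  gcongr

lemma Real.sin_mul_tan_le_cos {θ ω : ℝ} (hω : 0 < Real.cos ω) (hθω : 0 ≤ Real.cos (θ + ω)) :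
    Real.sin θ * Real.tan ω ≤ Real.cos θ := by
  rw [Real.cos_add] at hθω
  rw [Real.tan_eq_sin_div_cos, mul_div_assoc', div_le_iff₀ hω]
  linarith

lemma Real.sin_mul_lt_mul_cos_of_tan_lt_div {θ a b : ℝ} (hθ₀ : 0 < θ) (hθ : θ < Real.pi / 2)
    (hb : 0 ≤ b) (htan : Real.tan θ < a / b) : Real.sin θ * b < a * Real.cos θ := by
  have hcos : 0 < Real.cos θ := Real.cos_pos_of_mem_Ioo ⟨by linarith, hθ⟩
  -- `a / 0 = 0` in Lean, so `htan` rules out `b = 0`.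
  have hb' : 0 < b := by
    refine lt_of_le_of_ne hb fun h => ?_
    rw [← h, div_zero] at htan
    exact htan.not_ge (Real.tan_pos_of_pos_of_lt_pi_div_two hθ₀ hθ).le
  rwa [Real.tan_eq_sin_div_cos, div_lt_div_iff₀ hcos hb'] at htan

section EuclideanNorm

variable {d : ℕ}

lemma euclNorm_eq_norm_toLp (v : Fin d → ℂ) : euclNorm v = ‖WithLp.toLp 2 v‖ := by
  simp only [euclNorm, EuclideanSpace.norm_eq, Complex.sq_norm]

lemma sum_normSq_eq_one_iff {ξ : Fin d → ℂ} :
    (∑ i, Complex.normSq (ξ i)) = 1 ↔ WithLp.toLp 2 ξ ∈ Metric.sphere 0 1 := by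
  rw [mem_sphere_zero_iff_norm, ← euclNorm_eq_norm_toLp, euclNorm, Real.sqrt_eq_one]

lemma exists_sum_normSq_eq_one (hd : 0 < d) :
    ∃ ξ : Fin d → ℂ, (∑ i, Complex.normSq (ξ i)) = 1 := by
  have : Nonempty (Fin d) := ⟨⟨0, hd⟩⟩
  obtain ⟨x, hx⟩ := (NormedSpace.sphere_nonempty (E := EuclideanSpace ℂ (Fin d))).2 zero_le_one
  exact ⟨x.ofLp, sum_normSq_eq_one_iff.2 hx⟩

lemma opNorm_nonneg (M : Matrix (Fin d) (Fin d) ℂ) : 0 ≤ opNorm M :=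
  Real.sSup_nonneg fun _ ⟨_, _, hr⟩ => hr ▸ Real.sqrt_nonneg _

open scoped Matrix.Norms.L2Operator

lemma opNorm_eq_l2_opNorm (M : Matrix (Fin d) (Fin d) ℂ) : opNorm M = ‖M‖ := by
  rw [← l2_opNorm_toEuclideanCLM, ← ContinuousLinearMap.sSup_sphere_eq_norm, opNorm]
  congr 1
  ext r
  constructor
  · rintro ⟨ξ, hξ, rfl⟩
    exact ⟨WithLp.toLp 2 ξ, sum_normSq_eq_one_iff.1 hξ, by
      simp only [toEuclideanCLM_toLp, euclNorm_eq_norm_toLp]⟩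
  · rintro ⟨x, hx, rfl⟩
    exact ⟨x.ofLp, sum_normSq_eq_one_iff.2 hx, by
      rw [euclNorm_eq_norm_toLp, ← ofLp_toEuclideanCLM, WithLp.toLp_ofLp]⟩

lemma norm_mulVec_dotProduct_star_le (A : Matrix (Fin d) (Fin d) ℂ) {ξ : Fin d → ℂ}
    (hξ : (∑ i, Complex.normSq (ξ i)) = 1) : ‖A *ᵥ ξ ⬝ᵥ star ξ‖ ≤ ‖A‖ := by
  set x := WithLp.toLp 2 ξ
  have hx : ‖x‖ = 1 := mem_sphere_zero_iff_norm.1 (sum_normSq_eq_one_iff.1 hξ)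
  calc ‖A *ᵥ ξ ⬝ᵥ star ξ‖ = ‖inner ℂ x (toEuclideanCLM (𝕜 := ℂ) A x)‖ := by
        rw [toEuclideanCLM_toLp, EuclideanSpace.inner_toLp_toLp]
    _ ≤ ‖x‖ * (‖toEuclideanCLM (𝕜 := ℂ) A‖ * ‖x‖) :=
        (norm_inner_le_norm _ _).trans (by gcongr; exact ContinuousLinearMap.le_opNorm _ _)
    _ = ‖A‖ := by rw [hx, one_mul, mul_one, l2_opNorm_toEuclideanCLM]

lemma lamConst_le (A : Matrix (Fin d) (Fin d) ℂ) {ξ : Fin d → ℂ}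
    (hξ : (∑ i, Complex.normSq (ξ i)) = 1) : lamConst A ≤ (A *ᵥ ξ ⬝ᵥ star ξ).re := by
  refine csInf_le ⟨-‖A‖, ?_⟩ ⟨ξ, hξ, rfl⟩
  rintro _ ⟨ζ, hζ, rfl⟩
  exact neg_le_of_abs_le <| (Complex.abs_re_le_norm _).trans (norm_mulVec_dotProduct_star_le A hζ)

lemma opNorm_imMat_smul_le (c : ℂ) (A : Matrix (Fin d) (Fin d) ℂ) :
    opNorm (imMat (c • A)) ≤ |c.im| * opNorm (reMat A) + |c.re| * opNorm (imMat A) := by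
  have hmat : imMat (c • A) = (c.im : ℂ) • reMat A + (c.re : ℂ) • imMat A := by
    ext i j
    simp only [imMat, reMat, Matrix.add_apply, Matrix.smul_apply, smul_eq_mul, Complex.mul_im]
    push_cast
    ring
  rw [opNorm_eq_l2_opNorm, opNorm_eq_l2_opNorm, opNorm_eq_l2_opNorm, hmat]
  refine (norm_add_le _ _).trans_eq ?_
  rw [norm_smul, norm_smul, Complex.norm_real, Complex.norm_real, Real.norm_eq_abs,
    Real.norm_eq_abs]

end EuclideanNorm

section NumericalRange

variable {d : ℕ}

lemma lamConst_fin_zero (A : Matrix (Fin 0) (Fin 0) ℂ) : lamConst A = 0 := by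
  simp [lamConst]

lemma abs_arg_le_omegaConst (A : Matrix (Fin d) (Fin d) ℂ) {ξ : Fin d → ℂ}
    (hξ : (∑ i, Complex.normSq (ξ i)) = 1) : |(A *ᵥ ξ ⬝ᵥ star ξ).arg| ≤ omegaConst A :=
  le_csSup ⟨Real.pi, fun _ ⟨_, _, hr⟩ => hr ▸ Complex.abs_arg_le_pi _⟩ ⟨ξ, hξ, rfl⟩

lemma omegaConst_nonneg (A : Matrix (Fin d) (Fin d) ℂ) : 0 ≤ omegaConst A :=
  Real.sSup_nonneg fun _ ⟨_, _, hr⟩ => hr ▸ abs_nonneg _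

lemma lamConst_mul_le_lamConst_exp_smul (A : Matrix (Fin d) (Fin d) ℂ) {θ : ℝ} (hθ₀ : 0 ≤ θ)
    (hθω : θ < Real.pi / 2 - omegaConst A) :
    lamConst A * (Real.cos θ - Real.sin θ * Real.tan (omegaConst A)) ≤
      lamConst (Complex.exp (θ * Complex.I) • A) := by
  rcases Nat.eq_zero_or_pos d with rfl | hd
  · simp [lamConst_fin_zero]
  have hω₀ := omegaConst_nonneg A
  set ω := omegaConst A
  have hω : ω < Real.pi / 2 := by linarith
  have hsin : 0 ≤ Real.sin θ := Real.sin_nonneg_of_nonneg_of_le_pi hθ₀ (by linarith)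
  have hfactor : 0 ≤ Real.cos θ - Real.sin θ * Real.tan ω :=
    sub_nonneg.2 <| Real.sin_mul_tan_le_cos (Real.cos_pos_of_mem_Ioo ⟨by linarith, hω⟩)
      (Real.cos_nonneg_of_mem_Icc ⟨by linarith, by linarith⟩)
  obtain ⟨ξ₀, hξ₀⟩ := exists_sum_normSq_eq_one hd
  refine le_csInf ⟨_, ξ₀, hξ₀, rfl⟩ ?_
  rintro _ ⟨ξ, hξ, rfl⟩
  set z := A *ᵥ ξ ⬝ᵥ star ξ
  have him : z.im ≤ z.re * Real.tan ω :=
    (le_abs_self _).trans (Complex.abs_im_le_re_mul_tan (abs_arg_le_omegaConst A hξ) hω)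
  calc lamConst A * (Real.cos θ - Real.sin θ * Real.tan ω)
      ≤ z.re * (Real.cos θ - Real.sin θ * Real.tan ω) := by
        gcongr
        exact lamConst_le A hξ
    _ ≤ Real.cos θ * z.re - Real.sin θ * z.im := by nlinarith
    _ = ((Complex.exp (θ * Complex.I) • A) *ᵥ ξ ⬝ᵥ star ξ).re := by
        rw [smul_mulVec, smul_dotProduct, smul_eq_mul, Complex.mul_re,
          Complex.exp_ofReal_mul_I_re, Complex.exp_ofReal_mul_I_im]

end NumericalRange

lemma sigma_p_nonneg {p : ℝ} (hp : 2 ≤ p) : 0 ≤ sigma_p p :=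
  div_nonneg (by linarith) (by positivity)

theorem rotation_smallness_criterion_general {d : ℕ} (p : ℝ) (hp : 2 < p)
    (A : Matrix (Fin d) (Fin d) ℂ)
    (hsmall : sigma_p p * opNorm (imMat A) < lamConst A)
    (θ : ℝ) (hθ : θ ∈ Set.Ioo 0 (Real.pi / 2 - omegaConst A))
    (htan : Real.tan θ <
      (lamConst A - sigma_p p * opNorm (imMat A)) /
        (lamConst A * Real.tan (omegaConst A) + sigma_p p * opNorm (reMat A))) :
    sigma_p p * opNorm (imMat (Complex.exp (θ * Complex.I) • A)) <
      lamConst (Complex.exp (θ * Complex.I) • A) := by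
  obtain ⟨hθ₀, hθω⟩ := hθ
  have hω₀ := omegaConst_nonneg A
  have hσ := sigma_p_nonneg hp.le
  have hlam : 0 < lamConst A := (mul_nonneg hσ (opNorm_nonneg _)).trans_lt hsmall
  have hθπ : θ < Real.pi / 2 := by linarith
  have htanω := Real.tan_nonneg_of_nonneg_of_le_pi_div_two hω₀ (by linarith)
  have hkey := Real.sin_mul_lt_mul_cos_of_tan_lt_div hθ₀ hθπ
    (add_nonneg (mul_nonneg hlam.le htanω) (mul_nonneg hσ (opNorm_nonneg _))) htan
  have hΛ := opNorm_imMat_smul_le (Complex.exp (θ * Complex.I)) A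
  rw [Complex.exp_ofReal_mul_I_re, Complex.exp_ofReal_mul_I_im,
    abs_of_pos (Real.sin_pos_of_pos_of_lt_pi hθ₀ (by linarith)),
    abs_of_pos (Real.cos_pos_of_mem_Ioo ⟨by linarith, hθπ⟩)] at hΛ
  calc sigma_p p * opNorm (imMat (Complex.exp (θ * Complex.I) • A))
      ≤ sigma_p p * (Real.sin θ * opNorm (reMat A) + Real.cos θ * opNorm (imMat A)) := by
        gcongr
    _ < lamConst A * (Real.cos θ - Real.sin θ * Real.tan (omegaConst A)) := by
        linear_combination hkey
    _ ≤ lamConst (Complex.exp (θ * Complex.I) • A) :=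
        lamConst_mul_le_lamConst_exp_smul A hθ₀.le hθω

theorem rotation_smallness_criterion {d : ℕ} (p : ℝ) (hp : 2 < p)
    (A : Matrix (Fin d) (Fin d) ℂ)
    (hlam : 0 < lamConst A)
    (hsmall : sigma_p p * opNorm (imMat A) < lamConst A)
    (θ : ℝ) (hθ : θ ∈ Set.Ioo 0 (Real.pi / 2 - omegaConst A))
    (htan : Real.tan θ <
      (lamConst A - sigma_p p * opNorm (imMat A)) /
        (lamConst A * Real.tan (omegaConst A) + sigma_p p * opNorm (reMat A))) :
    sigma_p p * opNorm (imMat (Complex.exp (θ * Complex.I) • A)) <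
      lamConst (Complex.exp (θ * Complex.I) • A) :=
  rotation_smallness_criterion_general p hp A hsmall θ hθ htan
end

section
/- Let H be a Hilbert space, V a Banach space, j : V → H bounded linear with dense range, a : V × V → ℂ a bounded sesquilinear form, and L : V → V* the associated operator ⟨Lu | v⟩ = a(u,v). Define the operator 𝓛 on H by: x ∈ dom(𝓛) with 𝓛x = y iff there is w ∈ V with j(w) = x and ⟨y, j(v)⟩_H = a(w,v) for all v ∈ V. If L : V → V* is bijective, then 𝓛 is bijective and 𝓛^{−1} = j ∘ L^{−1} ∘ j*, where j* : H → V* is the adjoint ⟨j*(h) | v⟩ = ⟨h, j(v)⟩_H. -/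
open scoped InnerProductSpace

/-- The graph of the operator `𝓛` associated to the form `a` via `j`:
`(x, y)` belongs to the graph iff there is `w ∈ V` with `j w = x` and
`⟨y, j v⟩ = a(w, v)` for all `v` (written as `⟪j v, y⟫ = a w v` in Mathlib's
convention where the inner product is conjugate-linear in the first slot). -/
def memGraph {V H : Type*} [NormedAddCommGroup V] [NormedSpace ℂ V]
    [NormedAddCommGroup H] [InnerProductSpace ℂ H]
    (j : V →L[ℂ] H) (a : V → V → ℂ) (x y : H) : Prop :=
  ∃ w : V, j w = x ∧ ∀ v : V, (⟪j v, y⟫_ℂ) = a w v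

theorem inverse_of_dynamical_operator {V H : Type*}
    [NormedAddCommGroup V] [NormedSpace ℂ V]
    [NormedAddCommGroup H] [InnerProductSpace ℂ H]
    (j : V →L[ℂ] H) (hdense : DenseRange j)
    (a : V → V → ℂ)
    (L : V → (V →L⋆[ℂ] ℂ)) (hLa : ∀ u v, L u v = a u v)
    (hLbij : Function.Bijective L)
    (Linv : (V →L⋆[ℂ] ℂ) → V)
    (hLinv₁ : Function.LeftInverse Linv L) (hLinv₂ : Function.RightInverse Linv L)
    (jstar : H → (V →L⋆[ℂ] ℂ)) (hjstar : ∀ h v, jstar h v = ⟪j v, h⟫_ℂ) :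
    ∀ f : H, memGraph j a (j (Linv (jstar f))) f ∧
      ∀ x : H, memGraph j a x f → x = j (Linv (jstar f)) := by
  intro f
  constructor
  · exact ⟨Linv (jstar f), rfl, fun v => by
      have h := hLa (Linv (jstar f)) v
      rw [hLinv₂] at h
      rw [← h, hjstar]⟩
  · rintro x ⟨w, hw, hv⟩
    have : L w = jstar f := by
      ext v
      rw [hLa, hjstar, hv]
    rw [← hw, ← this, hLinv₁]
end

section
/- Let w : O → ℂ be a weakly differentiable bounded function on an open set O ⊆ ℝ^d, Φ(z) := (|z| ∧ 1)·sgn(z) with sgn(z) = z/|z| for z ≠ 0 and sgn(0) = 0, and suppose ∇Φ(w) = i Ψ(w) 𝟙_{|w|>1} + 𝟙_{|w|≤1} ∇w, where Ψ(w) := (Im(sgn(conj w) ∇w)/|w|)·sgn(w). Then Re ∫_O ∇Φ(w) · conjugate(∇w − ∇Φ(w)) dx = ∫_{{|w|>1}} |Ψ(w)|² (|w| − 1) dx ≥ 0. -/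
open Complex ComplexConjugate

/- With `Ψ = c s`, `c = Im(conj s · a) / t` and `|s| = 1`, one has `Re(iΨ · conj a) = Im(conj Ψ · a) = c² t`
and `Re(iΨ · conj(iΨ)) = |Ψ|² = c²`, so each summand equals `c² (t - 1) = |Ψ|² (t - 1)`. -/

theorem re_I_mul_mul_conj_sub_I_mul (w z : ℂ) :
    (I * w * conj (z - I * w)).re = (conj w * z).im - normSq w := by
  simp only [mul_re, mul_im, map_sub, map_mul, conj_I, sub_re, sub_im, conj_re, conj_im, I_re,
    I_im, neg_im, neg_re, normSq_apply]
  ring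

theorem im_conj_ofReal_mul_mul (c : ℝ) (s z : ℂ) :
    (conj ((c : ℂ) * s) * z).im = c * (conj s * z).im := by
  rw [map_mul, conj_ofReal, mul_assoc, im_ofReal_mul]

theorem normSq_ofReal_mul_of_norm_eq_one (c : ℝ) {s : ℂ} (hs : ‖s‖ = 1) :
    normSq ((c : ℂ) * s) = c ^ 2 := by
  rw [normSq_mul, normSq_ofReal, normSq_eq_norm_sq, hs]
  ring

theorem re_I_mul_mul_conj_sub_I_mul_eq_normSq_mul {s : ℂ} (hs : ‖s‖ = 1) (a ψ : ℂ) (t : ℝ)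
    (hψ : ψ = (((conj s * a).im / t : ℝ) : ℂ) * s) :
    (I * ψ * conj (a - I * ψ)).re = normSq ψ * (t - 1) := by
  rw [re_I_mul_mul_conj_sub_I_mul, hψ, im_conj_ofReal_mul_mul, normSq_ofReal_mul_of_norm_eq_one _ hs]
  rcases eq_or_ne t 0 with rfl | ht
  · simp
  · field_simp

/-- Pointwise identity underlying `L^∞`-contractivity: for a vector `a ∈ ℂ^d`
(representing `∇w`), a unimodular `s = sgn(w)` and `t = |w| > 1`, with
`Ψ = (Im(conj s · a)/t) · s`, one has
`Re(iΨ · conj(a − iΨ)) = |Ψ|²(t − 1) ≥ 0`. -/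
theorem Linfty_contractivity_pointwise {d : ℕ} (a : Fin d → ℂ) (s : ℂ)
    (hs : ‖s‖ = 1) (t : ℝ) (ht : 1 < t)
    (Ψ : Fin d → ℂ)
    (hΨ : ∀ k, Ψ k = ((((starRingEnd ℂ) s * a k).im / t : ℝ) : ℂ) * s) :
    (∑ k, (Complex.I * Ψ k) * (starRingEnd ℂ) (a k - Complex.I * Ψ k)).re =
      (∑ k, Complex.normSq (Ψ k)) * (t - 1) ∧
    0 ≤ (∑ k, Complex.normSq (Ψ k)) * (t - 1) := by
  refine ⟨?_, mul_nonneg (Finset.sum_nonneg fun k _ => normSq_nonneg _) (by linarith)⟩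
  rw [re_sum, Finset.sum_mul]
  exact Finset.sum_congr rfl fun k _ =>
    re_I_mul_mul_conj_sub_I_mul_eq_normSq_mul hs (a k) (Ψ k) t (hΨ k)
end
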